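/- Let A₁ and A₂ be well-nested arc sets over the natural numbers and let D be a natural number. Suppose that for every pair of crossing arcs consisting of one arc from A₁ and one arc from A₂, written with endpoints i < i' < j < j' (where (i, j) is the arc whose left endpoint comes first), one has max(i' − i, j − i') ≤ D. Then the set of arcs in A₁ ∪ A₂ of span greater than 2D (i.e., arcs (a, b) with b − a > 2D) is well-nested. -/
import Mathlib


/-- Two arcs over ℕ cross: `a < c < b < d` or `c < a < d < b`. -/
def ArcsCross (e₁ e₂ : ℕ × ℕ) : Prop :=
  (e₁.1 < e₂.1 ∧ e₂.1 < e₁.2 ∧ e₁.2 < e₂.2) ∨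
  (e₂.1 < e₁.1 ∧ e₁.1 < e₂.2 ∧ e₂.2 < e₁.2)

/-- An arc set over ℕ: every arc `(a, b)` satisfies `a < b`. -/
def IsArcSet (S : Set (ℕ × ℕ)) : Prop :=
  ∀ e ∈ S, e.1 < e.2

/-- An arc set is well-nested if no two of its arcs cross. -/
def WellNested (S : Set (ℕ × ℕ)) : Prop :=
  ∀ e₁ ∈ S, ∀ e₂ ∈ S, ¬ ArcsCross e₁ e₂

/-- Long arcs are jointly well-nested: if every crossing pair (one arc from `A₁`, one from
`A₂`), written with endpoints `i < i' < j < j'` where `(i, j)` is the arc whose left endpoint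
comes first, has inner segment measure `max (i' - i) (j - i') ≤ D`, then the arcs of
`A₁ ∪ A₂` of span greater than `2 * D` form a well-nested set. -/
theorem long_arcs_wellNested (A₁ A₂ : Set (ℕ × ℕ)) (D : ℕ)
    (hA₁ : IsArcSet A₁) (hA₂ : IsArcSet A₂)
    (hwn₁ : WellNested A₁) (hwn₂ : WellNested A₂)
    (hbound : ∀ e₁ ∈ A₁, ∀ e₂ ∈ A₂,
      ((e₁.1 < e₂.1 ∧ e₂.1 < e₁.2 ∧ e₁.2 < e₂.2) →
        max (e₂.1 - e₁.1) (e₁.2 - e₂.1) ≤ D) ∧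
      ((e₂.1 < e₁.1 ∧ e₁.1 < e₂.2 ∧ e₂.2 < e₁.2) →
        max (e₁.1 - e₂.1) (e₂.2 - e₁.1) ≤ D)) :
    WellNested {e ∈ A₁ ∪ A₂ | 2 * D < e.2 - e.1} := by
  have key : ∀ a ∈ A₁, ∀ b ∈ A₂, 2 * D < a.2 - a.1 → 2 * D < b.2 - b.1 →
      ¬ ArcsCross a b := by
    intro a ha b hb hsa hsb hc
    obtain ⟨h1, h2⟩ := hbound a ha b hb
    rcases hc with ⟨x, y, z⟩ | ⟨x, y, z⟩
    · have := max_le_iff.mp (h1 ⟨x, y, z⟩); omega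
    · have := max_le_iff.mp (h2 ⟨x, y, z⟩); omega
  rintro e₁ ⟨h₁, hs₁⟩ e₂ ⟨h₂, hs₂⟩ hc
  rcases h₁ with h₁ | h₁ <;> rcases h₂ with h₂ | h₂
  · exact hwn₁ e₁ h₁ e₂ h₂ hc
  · exact key e₁ h₁ e₂ h₂ hs₁ hs₂ hc
  · exact key e₂ h₂ e₁ h₁ hs₂ hs₁ (by rcases hc with h | h; exacts [Or.inr h, Or.inl h])
  · exact hwn₂ e₁ h₁ e₂ h₂ hc
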